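/- For every d ∈ D one has K ∩ W(d) = K ∩ U(d); moreover K = ⋂_{n≥0} cl(⋃{U(d) : d ∈ D_n}), i.e., in the defining intersection the balls U(d) may be used instead of the balls W(d). -/

import Mathlib

/-!
A point `x ∈ K ∩ W(d)` lies in the closure of the next-level balls meeting `W(d)`, and by the
disjointness condition these are the balls `W(e)` of the children `e` of `d`. Each `cl W(e)` lies
in `U(d)`. Since `σ(d) ∉ W(e)`, the radius of `W(e)` is at most `|σ(e) − σ(d)|`, so the balls of
the children with large `N_e` shrink to `σ(d)`, while only finitely many children have small
`N_e`; hence the closure of the union of all `W(e)` is still inside the open ball `U(d)`.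
For the second claim, every ball of level `n + 1` lies in the `U`-ball of its parent.
-/

open Set Topology

/-- The Cantor space `2^ℕ`, with coordinates indexed by the positive integers. -/
abbrev Cant : Type := ℕ+ → Bool

/-- The support of a point of the Cantor space, as a set of (positive) natural numbers. -/
def ksupp (x : Cant) : Set ℕ := {i | ∃ h : 0 < i, x ⟨i, h⟩ = true}

/-- The plane. -/
abbrev Plane : Type := EuclideanSpace ℝ (Fin 2)

/-- `N_d = max supp d` (with `sSup ∅ = 0` for the zero point). -/
noncomputable def Nd (d : Cant) : ℕ := sSup (ksupp d)

/-- The basic clopen set `V_d = {y : y(i) = d(i) for 1 ≤ i ≤ N_d}`. -/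
noncomputable def Vd (d : Cant) : Set Cant :=
  {y | ∀ i : ℕ+, (i : ℕ) ≤ Nd d → y i = d i}

/-- The set `D_d` of children of `d ∈ D`: the points of `D_{k_d+1}` agreeing with `d`
on the coordinates `1, …, N_d`. -/
noncomputable def Dch (d : Cant) : Set Cant :=
  {e | (ksupp e).Finite ∧ (ksupp e).ncard = (ksupp d).ncard + 1 ∧
    ∀ i : ℕ+, (i : ℕ) ≤ Nd d → e i = d i}

/-- The ball `W(d) = B(σ(d), 2^{−ℓ(d)})`. -/
noncomputable def Wb (σ : Cant → Plane) (ℓ : Cant → ℕ) (d : Cant) : Set Plane :=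
  Metric.ball (σ d) ((2 : ℝ) ^ (-(ℓ d : ℤ)))

/-- The ball `U(d) = B(σ(d), 2^{−ℓ(d)−1})`. -/
noncomputable def Ub (σ : Cant → Plane) (ℓ : Cant → ℕ) (d : Cant) : Set Plane :=
  Metric.ball (σ d) ((2 : ℝ) ^ (-(ℓ d : ℤ) - 1))

/-- The resulting Cantor set `K = ⋂_n cl (⋃ {W(d) : d ∈ D_n})`. -/
noncomputable def Kset (σ : Cant → Plane) (ℓ : Cant → ℕ) : Set Plane :=
  ⋂ n : ℕ, closure (⋃ d ∈ {d : Cant | (ksupp d).Finite ∧ (ksupp d).ncard = n}, Wb σ ℓ d)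

/-- The closed set `F(d) = cl U(d) \ ⋃_{e ∈ D_d} W(e)`. -/
noncomputable def Fd (σ : Cant → Plane) (ℓ : Cant → ℕ) (d : Cant) : Set Plane :=
  closure (Ub σ ℓ d) \ ⋃ e ∈ Dch d, Wb σ ℓ e

/-- The three conditions imposed on the maps `σ : D → ℝ²` and `ℓ : D → ω`:
(1) `⟨σ(e) : e ∈ D_d⟩` converges to `σ(d)` (in the sense that `σ(e)` is close to `σ(d)`
    once the added support element `N_e` of the child `e` is large);
(2) `cl W(e) ⊆ U(d) \ {σ(d)}` whenever `e ∈ D_d`;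
(3) `{cl W(d) : d ∈ D_n}` is pairwise disjoint for every `n`. -/
def CantorConds (σ : Cant → Plane) (ℓ : Cant → ℕ) : Prop :=
  (∀ d : Cant, (ksupp d).Finite → ∀ ε > (0 : ℝ), ∃ M : ℕ, ∀ e ∈ Dch d,
      M ≤ Nd e → dist (σ e) (σ d) < ε) ∧
  (∀ d : Cant, (ksupp d).Finite → ∀ e ∈ Dch d,
      closure (Wb σ ℓ e) ⊆ Ub σ ℓ d \ {σ d}) ∧
  (∀ n : ℕ, ∀ d e : Cant, (ksupp d).Finite → (ksupp d).ncard = n →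
      (ksupp e).Finite → (ksupp e).ncard = n → d ≠ e →
      Disjoint (closure (Wb σ ℓ d)) (closure (Wb σ ℓ e)))


def Dlevel (n : ℕ) : Set Cant := {d | (ksupp d).Finite ∧ (ksupp d).ncard = n}

lemma mem_ksupp_iff (x : Cant) (i : ℕ+) : (i : ℕ) ∈ ksupp x ↔ x i = true :=
  ⟨fun ⟨_, h⟩ => h, fun h => ⟨i.pos, h⟩⟩

lemma ksupp_injective : Function.Injective ksupp := by
  intro x y h
  funext i
  have hi := mem_ksupp_iff x i
  rw [h, mem_ksupp_iff] at hi
  exact Bool.eq_iff_iff.mpr hi.symm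

lemma finite_setOf_ksupp_subset {s : Set ℕ} (hs : s.Finite) : {x : Cant | ksupp x ⊆ s}.Finite :=
  Finite.of_finite_image (hs.finite_subsets.subset (image_subset_iff.mpr fun _ h => h))
    ksupp_injective.injOn

lemma le_Nd {x : Cant} (hx : (ksupp x).Finite) {i : ℕ} (hi : i ∈ ksupp x) : i ≤ Nd x :=
  le_csSup hx.bddAbove hi

lemma Nd_lt_of_forall_mem_lt {x : Cant} (hx : (ksupp x).Finite) {m : ℕ} (hm : 0 < m)
    (h : ∀ i ∈ ksupp x, i < m) : Nd x < m := by
  rcases (ksupp x).eq_empty_or_nonempty with h0 | hne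
  · simpa [Nd, h0] using hm
  · exact h _ (Nat.sSup_mem hne hx.bddAbove)

/-- The parent of `e` is `e` with its last support element `N_e` switched off. -/
lemma exists_parent {n : ℕ} {e : Cant} (he : e ∈ Dlevel (n + 1)) :
    ∃ d ∈ Dlevel n, e ∈ Dch d := by
  obtain ⟨hfin, hcard⟩ := he
  have hne : (ksupp e).Nonempty := nonempty_of_ncard_ne_zero (by omega)
  set m := Nd e
  have hm : m ∈ ksupp e := Nat.sSup_mem hne hfin.bddAbove
  let d : Cant := fun i => e i && (i : ℕ) != m
  have hsupp : ksupp d = ksupp e \ {m} := by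
    ext i
    simp only [ksupp, d, mem_sdiff, mem_ofPred_eq, mem_singleton_iff, Bool.and_eq_true,
      bne_iff_ne, ne_eq, PNat.mk_coe]
    exact ⟨fun ⟨h, he, hi⟩ => ⟨⟨h, he⟩, hi⟩, fun ⟨⟨h, he⟩, hi⟩ => ⟨h, he, hi⟩⟩
  have hdfin : (ksupp d).Finite := hsupp ▸ hfin.sdiff
  have hdcard : (ksupp d).ncard = n := by
    rw [hsupp, ncard_sdiff_singleton_of_mem hm, hcard, Nat.add_sub_cancel]
  have hNd : Nd d < m := Nd_lt_of_forall_mem_lt hdfin hm.1 fun i hi => by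
    rw [hsupp] at hi
    exact lt_of_le_of_ne (le_Nd hfin hi.1) hi.2
  refine ⟨d, ⟨hdfin, hdcard⟩, hfin, by rw [hdcard, hcard], fun i hi => ?_⟩
  simp [d, (hi.trans_lt hNd).ne]

lemma ball_subset_ball_two_mul_dist_of_notMem {X : Type*} [PseudoMetricSpace X] {a c : X}
    {r : ℝ} (hc : c ∉ Metric.ball a r) : Metric.ball a r ⊆ Metric.ball c (2 * dist a c) := by
  intro y hy
  rw [Metric.mem_ball, not_lt, dist_comm] at hc
  rw [Metric.mem_ball] at hy ⊢
  linarith [dist_triangle y a c]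

lemma closure_biUnion_subset_ball {X ι : Type*} [PseudoMetricSpace X] {s : Set ι}
    {A : ι → Set X} {c : X} {r ε : ℝ} (hε : ε < r)
    (hA : ∀ i ∈ s, closure (A i) ⊆ Metric.ball c r)
    (hfin : {i ∈ s | ¬ A i ⊆ Metric.closedBall c ε}.Finite) :
    closure (⋃ i ∈ s, A i) ⊆ Metric.ball c r := by
  set t := {i ∈ s | ¬ A i ⊆ Metric.closedBall c ε}
  have hcover : ⋃ i ∈ s, A i ⊆ (⋃ i ∈ t, closure (A i)) ∪ Metric.closedBall c ε := by
    refine iUnion₂_subset fun i hi => ?_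
    by_cases hit : i ∈ t
    · exact (subset_closure.trans (subset_biUnion_of_mem (u := fun i => closure (A i)) hit)).trans
        subset_union_left
    · exact (not_not.mp fun h => hit ⟨hi, h⟩).trans subset_union_right
  have hclosed : IsClosed ((⋃ i ∈ t, closure (A i)) ∪ Metric.closedBall c ε) :=
    (hfin.isClosed_biUnion fun _ _ => isClosed_closure).union Metric.isClosed_closedBall
  refine (closure_minimal hcover hclosed).trans (union_subset ?_ (Metric.closedBall_subset_ball hε))
  exact iUnion₂_subset fun i hi => hA i hi.1

section CantorConds

variable {σ : Cant → Plane} {ℓ : Cant → ℕ}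

lemma Ub_subset_Wb (d : Cant) : Ub σ ℓ d ⊆ Wb σ ℓ d :=
  Metric.ball_subset_ball (zpow_le_zpow_right₀ one_le_two (by omega))

lemma Wb_subset_Ub_of_mem_Dch (hc : CantorConds σ ℓ) {d e : Cant} (hd : (ksupp d).Finite)
    (he : e ∈ Dch d) :
    Wb σ ℓ e ⊆ Ub σ ℓ d :=
  subset_closure.trans ((hc.2.1 d hd e he).trans sdiff_subset)

lemma biUnion_Wb_succ_subset_biUnion_Ub (hc : CantorConds σ ℓ) (n : ℕ) :
    ⋃ e ∈ Dlevel (n + 1), Wb σ ℓ e ⊆ ⋃ d ∈ Dlevel n, Ub σ ℓ d := by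
  refine iUnion₂_subset fun e he => ?_
  obtain ⟨d, hd, hed⟩ := exists_parent he
  exact (Wb_subset_Ub_of_mem_Dch hc hd.1 hed).trans (subset_biUnion_of_mem hd)

/-- Near `W(d)`, the next level consists of the children of `d`: the balls of the other
children sit inside `W(d')` for a parent `d' ≠ d`, which is disjoint from `W(d)`. -/
lemma Wb_inter_biUnion_Wb_succ_subset (hc : CantorConds σ ℓ) {n : ℕ} {d : Cant}
    (hd : d ∈ Dlevel n) :
    Wb σ ℓ d ∩ ⋃ e ∈ Dlevel (n + 1), Wb σ ℓ e ⊆ ⋃ e ∈ Dch d, Wb σ ℓ e := by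
  rintro y ⟨hyd, hy⟩
  obtain ⟨e, he, hye⟩ := mem_iUnion₂.mp hy
  obtain ⟨d', hd', hed'⟩ := exists_parent he
  obtain rfl : d' = d := by
    by_contra hne
    have hyd' := Ub_subset_Wb d' (Wb_subset_Ub_of_mem_Dch hc hd'.1 hed' hye)
    exact disjoint_left.mp (hc.2.2 n d' d hd'.1 hd'.2 hd.1 hd.2 hne)
      (subset_closure hyd') (subset_closure hyd)
  exact mem_biUnion hed' hye

/-- Children `e` with large `N_e` have `σ(e)` near `σ(d)`, and since `σ(d) ∉ W(e)` the whole
ball `W(e)` is then near `σ(d)`; only finitely many children have small `N_e`. -/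
lemma closure_biUnion_Wb_Dch_subset_Ub (hc : CantorConds σ ℓ) {d : Cant} (hd : (ksupp d).Finite) :
    closure (⋃ e ∈ Dch d, Wb σ ℓ e) ⊆ Ub σ ℓ d := by
  set r : ℝ := 2 ^ (-(ℓ d : ℤ) - 1)
  have hr : 0 < r := by positivity
  obtain ⟨M, hM⟩ := hc.1 d hd (r / 4) (by positivity)
  refine closure_biUnion_subset_ball (ε := r / 2) (by linarith)
    (fun e he => (hc.2.1 d hd e he).trans sdiff_subset) ?_
  refine (finite_setOf_ksupp_subset (finite_Iio M)).subset fun e ⟨he, hfar⟩ i hi => ?_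
  have hNe : Nd e < M := by
    by_contra! hle
    have hσd : σ d ∉ Wb σ ℓ e := fun h => (hc.2.1 d hd e he (subset_closure h)).2 rfl
    refine hfar ((ball_subset_ball_two_mul_dist_of_notMem hσd).trans ?_)
    exact Metric.ball_subset_closedBall.trans
      (Metric.closedBall_subset_closedBall (by linarith [hM e he hle]))
  exact (le_Nd he.1 hi).trans_lt hNe

lemma Kset_inter_Wb_subset_Ub (hc : CantorConds σ ℓ) {d : Cant} (hd : (ksupp d).Finite) :
    Kset σ ℓ ∩ Wb σ ℓ d ⊆ Ub σ ℓ d := by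
  rintro x ⟨hxK, hxW⟩
  have hx : x ∈ closure (⋃ e ∈ Dlevel ((ksupp d).ncard + 1), Wb σ ℓ e) :=
    mem_iInter.mp hxK _
  have hx' := Metric.isOpen_ball.inter_closure ⟨hxW, hx⟩
  exact closure_biUnion_Wb_Dch_subset_Ub hc hd
    (closure_mono (Wb_inter_biUnion_Wb_succ_subset hc ⟨hd, rfl⟩) hx')

end CantorConds

/-- For every `d ∈ D` one has `K ∩ W(d) = K ∩ U(d)`, and in the intersection defining `K`
the balls `U(d)` may be used instead of the balls `W(d)`. -/
theorem Kset_inter_Wb_eq_inter_Ub (σ : Cant → Plane) (ℓ : Cant → ℕ)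
    (hc : CantorConds σ ℓ) :
    (∀ d : Cant, (ksupp d).Finite → Kset σ ℓ ∩ Wb σ ℓ d = Kset σ ℓ ∩ Ub σ ℓ d) ∧
      Kset σ ℓ =
        ⋂ n : ℕ, closure (⋃ d ∈ {d : Cant | (ksupp d).Finite ∧ (ksupp d).ncard = n},
          Ub σ ℓ d) := by
  refine ⟨fun d hd => subset_antisymm (fun x hx => ⟨hx.1, Kset_inter_Wb_subset_Ub hc hd hx⟩)
    (inter_subset_inter_right _ (Ub_subset_Wb d)), subset_antisymm ?_ ?_⟩
  · refine subset_iInter fun n => ?_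
    exact (iInter_subset _ (n + 1)).trans
      (closure_mono (biUnion_Wb_succ_subset_biUnion_Ub hc n))
  · exact iInter_mono fun n => closure_mono (biUnion_mono subset_rfl fun d _ => Ub_subset_Wb d)
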